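/- arXiv:0905.4758 — 2 statements merged into one kernel-verified Lean document; each statement's English description precedes it below -/
import Mathlib

section
/- Define F(n) = Σ_{π ∈ S_n} q^{(c-ba)(π)}. Then for n ≥ 1, F(n) = Σ_{k=1}^{n} a(n,k) F(n−k) with F(0) = 1, where a(n,k) = Σ_{n ≥ t_1 > ⋯ > t_k ≥ 1} Π_{j=1}^{k−1} (q^{n−t_j} − 1). -/
/-!
Write `FEnd N u` for the part of `F (N + 1)` coming from permutations whose last entry is
`u + 1`. Appending a new last entry `t + 1` to a permutation of length `M + 1` ending in `v + 1`
(raising the old entries `≥ t + 1` by one) keeps every old occurrence of (c-ba); if this creates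
a final descent, i.e. `t ≤ v`, it adds one occurrence for each of the `M - v` earlier entries
above `v + 1`. Hence `FEnd (M + 1) t = ∑ v, q ^ ([t ≤ v] (M - v)) FEnd M v`, so that
`FEnd (M + 1) u = FEnd (M + 1) (u + 1) + (q ^ (M - u) - 1) FEnd M u` and `FEnd N N = F N`.
Solving this recursion gives `FEnd N (N - p) = ∑ m, e_m(q ^ 0 - 1, …, q ^ (p - 1) - 1) F (N - m)`,
and summing over `p < n` produces `a n (m + 1)`: split `{t_1 > ⋯ > t_(m+1)}` by its minimum
`n - p` and substitute `e = n - t_j` in the remaining ones.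
-/

open Finset Polynomial

/-- A permutation of `Fin n` as a word `{0,...,n-1} → {1,...,n}`. -/
def toWord (n : ℕ) (π : Equiv.Perm (Fin n)) : ℕ → ℕ :=
  fun k => if h : k < n then (π ⟨k, h⟩ : ℕ) + 1 else 0

/-- The number of occurrences of (c-ba) in a word of length `ℓ`:
triples (j,i,i+1) with j < i and w (i+1) < w i < w j. -/
def cbaCount (w : ℕ → ℕ) (ℓ : ℕ) : ℕ :=
  ((range ℓ ×ˢ range ℓ).filter
    (fun p => p.1 < p.2 ∧ p.2 + 1 < ℓ ∧ w (p.2 + 1) < w p.2 ∧ w p.2 < w p.1)).card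

/-- `F n = Σ_{π ∈ S_n} q^{(c-ba)(π)}`. -/
noncomputable def F (n : ℕ) : Polynomial ℤ :=
  ∑ π : Equiv.Perm (Fin n), (X : Polynomial ℤ) ^ cbaCount (toWord n π) n

/-- `a n k = Σ_{n ≥ t_1 > ⋯ > t_k ≥ 1} Π_{j=1}^{k-1} (q^{n - t_j} - 1)`; the sum ranges
over k-element subsets `S = {t_1 > ⋯ > t_k}` of `{1,...,n}`, and if `L` is `S` sorted
increasingly then `t_j = L[k-j]` (0-based). -/
noncomputable def a (n k : ℕ) : Polynomial ℤ :=
  ∑ S ∈ (Finset.Icc 1 n).powersetCard k,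
    ∏ j ∈ range (k - 1),
      ((X : Polynomial ℤ) ^ (n - (S.sort (· ≤ ·)).getD (k - j - 1) 0) - 1)

theorem Multiset.esymm_cons_succ {R : Type*} [CommSemiring R] (x : R) (s : Multiset R)
    (m : ℕ) : (x ::ₘ s).esymm (m + 1) = s.esymm (m + 1) + x * s.esymm m := by
  simp [Multiset.esymm, Multiset.powersetCard_cons, Multiset.sum_map_mul_left]

theorem Finset.sum_powersetCard_succ_eq_sum_min {α M : Type*} [LinearOrder α]
    [AddCommMonoid M] (s : Finset α) (m : ℕ) (g : Finset α → M) :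
    ∑ S ∈ s.powersetCard (m + 1), g S =
      ∑ c ∈ s, ∑ S ∈ {x ∈ s | c < x}.powersetCard m, g (insert c S) := by
  induction s using Finset.induction_on_min with
  | empty => rw [powersetCard_eq_empty.2 (by simp), sum_empty, sum_empty]
  | insert a s ha ih =>
    have has : a ∉ s := fun h => lt_irrefl a (ha a h)
    have hnot : ∀ S ∈ s.powersetCard m, a ∉ S := fun S hS h => has ((mem_powersetCard.1 hS).1 h)
    rw [powersetCard_succ_insert has, sum_union, sum_image, ih, sum_insert has, add_comm,
      filter_insert, if_neg (lt_irrefl a), filter_true_of_mem ha]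
    · refine congrArg _ (sum_congr rfl fun c hc => ?_)
      rw [filter_insert, if_neg (ha c hc).not_gt]
    · intro S hS T hT hST
      rw [← erase_insert (hnot S hS), hST, erase_insert (hnot T hT)]
    · refine disjoint_left.2 fun S hS hS' => ?_
      obtain ⟨T, -, rfl⟩ := mem_image.1 hS'
      exact has ((mem_powersetCard.1 hS).1 (mem_insert_self a T))

theorem Finset.prod_range_getD_sort {M : Type*} [CommMonoid M] (S : Finset ℕ) (f : ℕ → M) :
    ∏ j ∈ range #S, f ((S.sort (· ≤ ·)).getD j 0) = ∏ t ∈ S, f t := by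
  rw [← length_sort (· ≤ ·), ← Fin.prod_univ_eq_prod_range]
  simp only [List.getD_eq_getElem _ _ (Fin.is_lt _)]
  rw [Fin.prod_univ_fun_getElem, ← prod_map_val, ← sort_eq S (· ≤ ·), Multiset.map_coe,
    Multiset.prod_coe]

theorem Finset.prod_getD_sort_insert_of_lt {M : Type*} [CommMonoid M] {c : ℕ} {S : Finset ℕ}
    (hc : ∀ t ∈ S, c < t) (f : ℕ → M) :
    ∏ j ∈ range #S, f (((insert c S).sort (· ≤ ·)).getD (#S + 1 - j - 1) 0) = ∏ t ∈ S, f t := by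
  rw [sort_insert _ (fun t ht => (hc t ht).le) fun h => lt_irrefl c (hc c h),
    ← prod_range_getD_sort S f, ← prod_range_reflect]
  refine prod_congr rfl fun j hj => ?_
  rw [show #S + 1 - (#S - 1 - j) - 1 = j + 1 by simp at hj; omega, List.getD_cons_succ]

theorem Nat.Ioc_val_map_const_sub (c n : ℕ) :
    (Ioc c n).val.map (n - ·) = Multiset.range (n - c) := by
  rw [← image_val_of_injOn fun x hx y hy h => by simp at hx hy h; omega, ← range_val]
  congr 1
  ext x
  simp only [mem_image, mem_Ioc, mem_range]
  exact ⟨by rintro ⟨y, hy, rfl⟩; omega, fun hx => ⟨n - x, by omega, by omega⟩⟩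

namespace Cba

theorem cbaCount_succ_eq_sum (w : ℕ → ℕ) (ℓ : ℕ) :
    cbaCount w (ℓ + 1) =
      ∑ i ∈ range ℓ, if w (i + 1) < w i then #{j ∈ range i | w i < w j} else 0 := by
  rw [cbaCount, card_filter, sum_product_right, sum_range_succ]
  simp only [← card_filter]
  rw [filter_false_of_mem (by omega), card_empty, add_zero]
  refine sum_congr rfl fun i hi => ?_
  rw [mem_range] at hi
  split_ifs with h
  · congr 1
    ext j
    simp only [mem_filter, mem_range]
    exact ⟨fun ⟨_, hji, _, _, hij⟩ => ⟨hji, hij⟩,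
      fun ⟨hji, hij⟩ => ⟨by omega, hji, by omega, h, hij⟩⟩
  · rw [card_eq_zero, filter_eq_empty_iff]
    tauto

theorem cbaCount_congr {w w' : ℕ → ℕ} {ℓ : ℕ}
    (h : ∀ i < ℓ, ∀ j < ℓ, w i < w j ↔ w' i < w' j) : cbaCount w ℓ = cbaCount w' ℓ := by
  unfold cbaCount
  congr 1
  refine filter_congr fun p hp => ?_
  simp only [mem_product, mem_range] at hp
  refine and_congr_right fun _ => and_congr_right fun hi => ?_
  rw [h _ hi _ hp.2, h _ hp.2 _ hp.1]

theorem cbaCount_succ_succ (w : ℕ → ℕ) (ℓ : ℕ) :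
    cbaCount w (ℓ + 2) = cbaCount w (ℓ + 1) +
      if w (ℓ + 1) < w ℓ then #{j ∈ range ℓ | w ℓ < w j} else 0 := by
  rw [cbaCount_succ_eq_sum, cbaCount_succ_eq_sum, sum_range_succ]

theorem toWord_of_lt {n k : ℕ} (π : Equiv.Perm (Fin n)) (hk : k < n) :
    toWord n π k = π ⟨k, hk⟩ + 1 :=
  dif_pos hk

theorem toWord_last {M : ℕ} (π : Equiv.Perm (Fin (M + 1))) :
    toWord (M + 1) π M = π (Fin.last M) + 1 :=
  toWord_of_lt π (Nat.lt_succ_self M)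

theorem card_filter_toWord_lt {M : ℕ} (π : Equiv.Perm (Fin (M + 1))) :
    #{j ∈ range M | toWord (M + 1) π M < toWord (M + 1) π j} = M - π (Fin.last M) := by
  have hlast : #{j ∈ range M | toWord (M + 1) π M < toWord (M + 1) π j} =
      #{j ∈ range (M + 1) | toWord (M + 1) π M < toWord (M + 1) π j} := by
    rw [range_add_one, filter_insert, if_neg (lt_irrefl _)]
  rw [hlast, card_filter, ← Fin.sum_univ_eq_sum_range
    (fun j => if toWord (M + 1) π M < toWord (M + 1) π j then 1 else 0)]
  simp only [toWord_last, toWord_of_lt π (Fin.is_lt _), Fin.eta,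
    add_lt_add_iff_right, Fin.val_fin_lt]
  rw [Equiv.sum_comp π (fun y => if π (Fin.last M) < y then 1 else 0), ← card_filter,
    filter_lt_eq_Ioi, Fin.card_Ioi, Nat.add_sub_cancel]

/-- The permutation of `Fin (M + 1)` with last value `t` whose first `M` values are order
isomorphic to `π`. -/
def insertLast {M : ℕ} (t : Fin (M + 1)) (π : Equiv.Perm (Fin M)) : Equiv.Perm (Fin (M + 1)) :=
  finSuccEquivLast.trans ((Equiv.optionCongr π).trans (finSuccEquiv' t).symm)

@[simp] theorem insertLast_castSucc {M : ℕ} (t : Fin (M + 1)) (π : Equiv.Perm (Fin M))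
    (i : Fin M) : insertLast t π i.castSucc = t.succAbove (π i) := by
  simp [insertLast]

@[simp] theorem insertLast_last {M : ℕ} (t : Fin (M + 1)) (π : Equiv.Perm (Fin M)) :
    insertLast t π (Fin.last M) = t := by
  simp [insertLast]

theorem insertLast_bijective (M : ℕ) :
    Function.Bijective fun p : Fin (M + 1) × Equiv.Perm (Fin M) => insertLast p.1 p.2 := by
  rw [Fintype.bijective_iff_injective_and_card]
  refine ⟨fun ⟨t, π⟩ ⟨t', π'⟩ h => ?_, by simp [Fintype.card_perm, Nat.factorial_succ]⟩
  have ht : t = t' := by simpa using congr($h (Fin.last M))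
  subst ht
  have hπ : π = π' := Equiv.ext fun i =>
    Fin.succAbove_right_injective (p := t) (by simpa using congr($h i.castSucc))
  rw [hπ]

section insertLast

variable {M : ℕ} (t : Fin (M + 2)) (π : Equiv.Perm (Fin (M + 1)))

theorem toWord_insertLast_of_lt {k : ℕ} (hk : k < M + 1) :
    toWord (M + 2) (insertLast t π) k = t.succAbove (π ⟨k, hk⟩) + 1 := by
  rw [toWord_of_lt _ (by omega), ← insertLast_castSucc]
  rfl

theorem toWord_insertLast_last : toWord (M + 2) (insertLast t π) (M + 1) = t + 1 := by
  rw [toWord_of_lt _ (Nat.lt_succ_self _)]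
  exact congrArg (· + 1) (congrArg Fin.val (insertLast_last t π))

theorem toWord_insertLast_lt_iff (i : ℕ) (hi : i < M + 1) (j : ℕ) (hj : j < M + 1) :
    toWord (M + 2) (insertLast t π) i < toWord (M + 2) (insertLast t π) j ↔
      toWord (M + 1) π i < toWord (M + 1) π j := by
  rw [toWord_insertLast_of_lt t π hi, toWord_insertLast_of_lt t π hj, toWord_of_lt π hi,
    toWord_of_lt π hj, add_lt_add_iff_right, add_lt_add_iff_right, Fin.val_fin_lt,
    Fin.val_fin_lt, Fin.succAbove_lt_succAbove_iff]

theorem toWord_insertLast_descent_iff :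
    toWord (M + 2) (insertLast t π) (M + 1) < toWord (M + 2) (insertLast t π) M ↔
      (t : ℕ) ≤ π (Fin.last M) := by
  rw [toWord_insertLast_last, toWord_insertLast_of_lt t π (Nat.lt_succ_self M),
    add_lt_add_iff_right, Fin.val_fin_lt, Fin.lt_succAbove_iff_le_castSucc, Fin.le_def,
    Fin.val_castSucc]
  rfl

theorem cbaCount_insertLast :
    cbaCount (toWord (M + 2) (insertLast t π)) (M + 2) = cbaCount (toWord (M + 1) π) (M + 1) +
      if (t : ℕ) ≤ π (Fin.last M) then M - π (Fin.last M) else 0 := by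
  have hord := toWord_insertLast_lt_iff t π
  rw [cbaCount_succ_succ, cbaCount_congr hord, ← card_filter_toWord_lt]
  refine congrArg _ (if_congr (toWord_insertLast_descent_iff t π) ?_ rfl)
  exact congrArg card (filter_congr fun j hj => hord _ (by omega) _ (by simp at hj; omega))

end insertLast

theorem sum_filter_last_eq_sum_insertLast {R : Type*} [AddCommMonoid R] {M : ℕ}
    (f : Equiv.Perm (Fin (M + 1)) → R) (t : Fin (M + 1)) :
    ∑ σ with σ (Fin.last M) = t, f σ = ∑ π, f (insertLast t π) := by
  rw [sum_filter, ← (insertLast_bijective M).sum_comp, Fintype.sum_prod_type]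
  simp

noncomputable def cbaWeight (n : ℕ) (π : Equiv.Perm (Fin n)) : ℤ[X] :=
  X ^ cbaCount (toWord n π) n

noncomputable def FEnd (N u : ℕ) : ℤ[X] :=
  ∑ σ : Equiv.Perm (Fin (N + 1)) with (σ (Fin.last N) : ℕ) = u, cbaWeight (N + 1) σ

theorem sum_mul_FEnd (N : ℕ) (h : ℕ → ℤ[X]) :
    ∑ v ∈ range (N + 1), h v * FEnd N v =
      ∑ σ : Equiv.Perm (Fin (N + 1)), h (σ (Fin.last N)) * cbaWeight (N + 1) σ := by
  simp only [FEnd, mul_sum]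
  rw [← sum_fiberwise_of_maps_to (g := fun σ : Equiv.Perm (Fin (N + 1)) => (σ (Fin.last N) : ℕ))
    fun σ _ => mem_range.2 (σ (Fin.last N)).is_lt]
  exact sum_congr rfl fun v _ => sum_congr rfl fun σ hσ => by rw [(mem_filter.1 hσ).2]

theorem F_succ_eq_sum_FEnd (N : ℕ) : F (N + 1) = ∑ u ∈ range (N + 1), FEnd N u := by
  simpa [F, cbaWeight] using (sum_mul_FEnd N 1).symm

theorem FEnd_succ_eq_sum (M t : ℕ) (ht : t < M + 2) :
    FEnd (M + 1) t = ∑ v ∈ range (M + 1), X ^ (if t ≤ v then M - v else 0) * FEnd M v := by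
  rw [sum_mul_FEnd, FEnd, filter_congr fun σ _ => (Fin.ext_iff (b := ⟨t, ht⟩)).symm,
    sum_filter_last_eq_sum_insertLast]
  refine sum_congr rfl fun π _ => ?_
  rw [cbaWeight, cbaWeight, cbaCount_insertLast, pow_add, mul_comm]

theorem FEnd_self (N : ℕ) : FEnd N N = F N := by
  cases N with
  | zero => simp [FEnd, F, cbaWeight, cbaCount]
  | succ M =>
    rw [FEnd_succ_eq_sum M (M + 1) (by omega), F_succ_eq_sum_FEnd]
    exact sum_congr rfl fun v hv => by simp [(by simpa using hv : v < M + 1).not_ge]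

theorem FEnd_succ_eq_FEnd_succ_add (u p : ℕ) :
    FEnd (u + p + 1) u = FEnd (u + p + 1) (u + 1) + (X ^ p - 1) * FEnd (u + p) u := by
  rw [← sub_eq_iff_eq_add', FEnd_succ_eq_sum _ _ (by omega), FEnd_succ_eq_sum _ _ (by omega),
    ← sum_sub_distrib, sum_eq_single u]
  · simp [sub_one_mul]
  · intro v _ hvu
    rw [if_congr (by omega : u ≤ v ↔ u + 1 ≤ v) rfl rfl, sub_self]
  · simp

noncomputable def esymmQ (p m : ℕ) : ℤ[X] :=
  ((Multiset.range p).map fun e => X ^ e - 1).esymm m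

@[simp] theorem esymmQ_zero_right (p : ℕ) : esymmQ p 0 = 1 := by
  simp [esymmQ, Multiset.esymm]

@[simp] theorem esymmQ_zero_succ (m : ℕ) : esymmQ 0 (m + 1) = 0 := by
  simp [esymmQ, Multiset.esymm, Multiset.powersetCard_zero_right]

theorem esymmQ_succ_succ (p m : ℕ) :
    esymmQ (p + 1) (m + 1) = esymmQ p (m + 1) + (X ^ p - 1) * esymmQ p m := by
  rw [esymmQ, Multiset.range_succ, Multiset.map_cons, Multiset.esymm_cons_succ]
  rfl

theorem FEnd_add_eq_sum_esymmQ (u p : ℕ) :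
    FEnd (u + p) u = ∑ m ∈ range (u + p + 1), esymmQ p m * F (u + p - m) := by
  induction p generalizing u with
  | zero => simp [sum_range_succ', FEnd_self]
  | succ p ih =>
    rw [← add_assoc, FEnd_succ_eq_FEnd_succ_add, add_right_comm u p 1, ih, ih,
      add_right_comm u 1 p, sum_range_succ', sum_range_succ' _ (u + p + 1)]
    simp only [esymmQ_succ_succ, esymmQ_zero_right, add_mul, sum_add_distrib, mul_sum, mul_assoc,
      Nat.add_sub_add_right]
    abel

theorem sum_powersetCard_Ioc_eq_esymmQ (c n m : ℕ) :
    ∑ S ∈ (Ioc c n).powersetCard m, ∏ t ∈ S, (X ^ (n - t) - 1 : ℤ[X]) = esymmQ (n - c) m := by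
  rw [← esymm_map_val, esymmQ, ← Nat.Ioc_val_map_const_sub, Multiset.map_map]
  rfl

theorem a_succ (n m : ℕ) : a n (m + 1) = ∑ p ∈ range n, esymmQ p m := by
  have hfilter : ∀ c, {x ∈ Icc 1 n | c < x} = Ioc c n := fun c => by ext; simp; omega
  have hreflect := sum_Ico_reflect (esymmQ · m) 1 (le_refl (n + 1))
  rw [Nat.add_sub_cancel, Nat.sub_self, Ico_add_one_right_eq_Icc, ← range_eq_Ico] at hreflect
  rw [a, sum_powersetCard_succ_eq_sum_min, ← hreflect]
  refine sum_congr rfl fun c _ => ?_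
  rw [hfilter, ← sum_powersetCard_Ioc_eq_esymmQ]
  refine sum_congr rfl fun S hS => ?_
  obtain ⟨hsub, rfl⟩ := mem_powersetCard.1 hS
  rw [Nat.add_sub_cancel]
  exact prod_getD_sort_insert_of_lt (fun t ht => (mem_Ioc.1 (hsub ht)).1)
    fun t => (X ^ (n - t) - 1 : ℤ[X])

theorem F_zero : F 0 = 1 := by
  simp [F, cbaCount]

theorem F_succ_eq_sum_a (N : ℕ) :
    F (N + 1) = ∑ m ∈ range (N + 1), a (N + 1) (m + 1) * F (N - m) := by
  have hFEnd : ∀ u ∈ range (N + 1),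
      FEnd N u = ∑ m ∈ range (N + 1), esymmQ (N - u) m * F (N - m) := fun u hu => by
    simpa [Nat.add_sub_cancel' (mem_range_succ_iff.1 hu)] using FEnd_add_eq_sum_esymmQ u (N - u)
  simp only [F_succ_eq_sum_FEnd, sum_congr rfl hFEnd, a_succ, sum_mul]
  rw [sum_comm]
  exact sum_congr rfl fun m _ => sum_range_reflect (esymmQ · m * F (N - m)) (N + 1)

end Cba

theorem cba_distribution_recurrence :
    F 0 = 1 ∧ ∀ n, 1 ≤ n → F n = ∑ k ∈ Icc 1 n, a n k * F (n - k) := by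
  refine ⟨Cba.F_zero, fun n hn => ?_⟩
  obtain ⟨N, rfl⟩ := Nat.exists_eq_add_of_le' hn
  rw [Cba.F_succ_eq_sum_a, ← Ico_add_one_right_eq_Icc, sum_Ico_eq_sum_range]
  simp only [Nat.add_sub_cancel, add_comm 1, Nat.add_sub_add_right]
end

section
/- Let a(n,k) = Σ_{n ≥ t_1 > ⋯ > t_k ≥ 1} Π_{j=1}^{k−1} (q^{n−t_j} − 1) and b(n,k) = Σ_{n ≥ t_1 > ⋯ > t_k ≥ 1} t_k Π_{j=1}^{k} (q^{n−t_j} − 1). Then for n ≥ 1 and k ≥ 2, a(n,k) = b(n−1,k−1). -/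
/-!
In `a n k` the product omits exactly the smallest element `m = t_k`. Removing `m` and shifting
the other elements down by one identifies the `k`-subsets of `[1, n]` with the pairs `(T, m)`
where `T` is a `(k-1)`-subset of `[1, n-1]` and `1 ≤ m ≤ min T`; the shift turns
`q^(n - t) - 1` into `q^((n-1) - (t-1)) - 1`. Summing over `m` for fixed `T` produces the weight
`min T = t_k` of `b (n-1) (k-1)`.
-/

open Finset Polynomial

/-- `b n k = Σ_{n ≥ t_1 > ⋯ > t_k ≥ 1} t_k Π_{j=1}^{k} (q^{n - t_j} - 1)`. -/
noncomputable def b (n k : ℕ) : Polynomial ℤ :=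
  ∑ S ∈ (Finset.Icc 1 n).powersetCard k,
    ((S.sort (· ≤ ·)).getD 0 0 : Polynomial ℤ) *
      ∏ j ∈ range k,
        ((X : Polynomial ℤ) ^ (n - (S.sort (· ≤ ·)).getD (k - j - 1) 0) - 1)

theorem prod_range_getD_sort_rev {M : Type*} [CommMonoid M] (s : Finset ℕ) (f : ℕ → M) :
    ∏ j ∈ range #s, f ((s.sort (· ≤ ·)).getD (#s - j - 1) 0) = ∏ t ∈ s, f t := by
  set L := s.sort (· ≤ ·)
  have hL : L.length = #s := length_sort _
  calc ∏ j ∈ range #s, f (L.getD (#s - j - 1) 0) = ∏ j ∈ range #s, f (L.getD j 0) := by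
        simpa only [Nat.sub_right_comm] using prod_range_reflect (fun j => f (L.getD j 0)) #s
    _ = (L.map f).prod := by
        rw [← hL, prod_range (fun j => f (L.getD j 0)), ← Fin.prod_univ_fun_getElem]
        simp only [Fin.is_lt, List.getD_eq_getElem]
    _ = ∏ t ∈ s, f t := by
        rw [prod_eq_multiset_prod, ← sort_eq s (· ≤ ·), Multiset.map_coe, Multiset.prod_coe]

theorem prod_range_getD_sort_insert_of_lt {M : Type*} [CommMonoid M] {s : Finset ℕ} {m : ℕ}
    (hm : ∀ t ∈ s, m < t) (f : ℕ → M) :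
    ∏ j ∈ range #s, f (((insert m s).sort (· ≤ ·)).getD (#s + 1 - j - 1) 0) = ∏ t ∈ s, f t := by
  rw [sort_insert _ (fun t ht => (hm t ht).le) (fun h => lt_irrefl m (hm m h)),
    ← prod_range_getD_sort_rev s f]
  refine prod_congr rfl fun j hj => ?_
  rw [show #s + 1 - j - 1 = #s - j - 1 + 1 by have := mem_range.1 hj; omega, List.getD_cons_succ]

theorem getD_zero_sort_eq_min' {s : Finset ℕ} (hs : s.Nonempty) :
    (s.sort (· ≤ ·)).getD 0 0 = s.min' hs := by
  rw [List.getD_eq_getElem _ _ (by simpa using hs.card_pos), sorted_zero_eq_min']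

theorem Finset.eq_and_eq_of_insert_eq_insert {α : Type*} [LinearOrder α] {m m' : α}
    {s s' : Finset α} (hs : ∀ t ∈ s, m < t) (hs' : ∀ t ∈ s', m' < t)
    (h : insert m s = insert m' s') : m = m' ∧ s = s' := by
  have le_of_mem {a b : α} {u : Finset α} (hu : ∀ t ∈ u, b < t) (ha : a ∈ insert b u) : b ≤ a := by
    rcases mem_insert.1 ha with rfl | ha
    exacts [le_rfl, (hu a ha).le]
  obtain rfl : m = m' := le_antisymm (le_of_mem hs (h ▸ mem_insert_self m' s'))
    (le_of_mem hs' (h ▸ mem_insert_self m s))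
  refine ⟨rfl, ?_⟩
  rw [← erase_insert (fun hm => lt_irrefl m (hs m hm)), h,
    erase_insert (fun hm => lt_irrefl m (hs' m hm))]

def lowerBoundPairs (n k : ℕ) : Finset (Finset ℕ × ℕ) :=
  {p ∈ powersetCard k (Icc 1 n) ×ˢ Icc 1 n | ∀ t ∈ p.1, p.2 ≤ t}

theorem mem_lowerBoundPairs {n k : ℕ} {p : Finset ℕ × ℕ} :
    p ∈ lowerBoundPairs n k ↔
      (p.1 ⊆ Icc 1 n ∧ #p.1 = k) ∧ p.2 ∈ Icc 1 n ∧ ∀ t ∈ p.1, p.2 ≤ t := by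
  simp only [lowerBoundPairs, mem_filter, mem_product, mem_powersetCard, and_assoc]

theorem sum_lowerBoundPairs {M : Type*} [AddCommMonoid M] (n k : ℕ) (F : Finset ℕ → M) :
    ∑ p ∈ lowerBoundPairs n k, F p.1 =
      ∑ T ∈ powersetCard k (Icc 1 n), #{m ∈ Icc 1 n | ∀ t ∈ T, m ≤ t} • F T := by
  rw [lowerBoundPairs, sum_filter, sum_product]
  refine sum_congr rfl fun T _ => ?_
  rw [← sum_filter]
  exact sum_const (F T)

theorem card_filter_forall_le {n : ℕ} {T : Finset ℕ} (hT : T ⊆ Icc 1 n) (hne : T.Nonempty) :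
    #{m ∈ Icc 1 n | ∀ t ∈ T, m ≤ t} = (T.sort (· ≤ ·)).getD 0 0 := by
  have hmin : T.min' hne ≤ n := (mem_Icc.1 (hT (T.min'_mem hne))).2
  have : {m ∈ Icc 1 n | ∀ t ∈ T, m ≤ t} = Icc 1 (T.min' hne) := by
    ext m
    simp only [mem_filter, mem_Icc, ← le_min'_iff T hne]
    omega
  rw [this, Nat.card_Icc, Nat.add_sub_cancel, getD_zero_sort_eq_min']

theorem b_eq_sum_lowerBoundPairs (n k : ℕ) (hk : 1 ≤ k) :
    b n k = ∑ p ∈ lowerBoundPairs n k, ∏ t ∈ p.1, ((X : ℤ[X]) ^ (n - t) - 1) := by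
  rw [b, sum_lowerBoundPairs n k fun T => ∏ t ∈ T, ((X : ℤ[X]) ^ (n - t) - 1)]
  refine sum_congr rfl fun T hT => ?_
  obtain ⟨hTsub, hTcard⟩ := mem_powersetCard.1 hT
  have hne : T.Nonempty := card_pos.1 (by omega)
  rw [← hTcard, prod_range_getD_sort_rev T fun t => (X : ℤ[X]) ^ (n - t) - 1,
    card_filter_forall_le hTsub hne, nsmul_eq_mul]

def insertShift (p : Finset ℕ × ℕ) : Finset ℕ :=
  insert p.2 (p.1.map (addRightEmbedding 1))

theorem snd_lt_of_mem_lowerBoundPairs {n k : ℕ} {p : Finset ℕ × ℕ}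
    (hp : p ∈ lowerBoundPairs n k) : ∀ t ∈ p.1.map (addRightEmbedding 1), p.2 < t := by
  simp only [mem_map, addRightEmbedding_apply, forall_exists_index, and_imp,
    forall_apply_eq_imp_iff₂]
  exact fun t ht => Nat.lt_succ_of_le ((mem_lowerBoundPairs.1 hp).2.2 t ht)

theorem insertShift_mem_powersetCard {n k : ℕ} {p : Finset ℕ × ℕ}
    (hp : p ∈ lowerBoundPairs n k) : insertShift p ∈ powersetCard (k + 1) (Icc 1 (n + 1)) := by
  obtain ⟨⟨hsub, hcard⟩, hm, -⟩ := mem_lowerBoundPairs.1 hp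
  have hlt := snd_lt_of_mem_lowerBoundPairs hp
  rw [mem_powersetCard, insertShift, card_insert_of_notMem fun h => lt_irrefl _ (hlt _ h),
    card_map, hcard]
  refine ⟨insert_subset (Icc_subset_Icc_right (by omega) hm) ?_, rfl⟩
  refine (map_subset_map.2 hsub).trans ?_
  rw [map_add_right_Icc]
  exact Icc_subset_Icc_left (by norm_num)

theorem insertShift_injOn (n k : ℕ) : Set.InjOn insertShift (lowerBoundPairs n k) := by
  intro p hp p' hp' h
  obtain ⟨hm, hT⟩ := eq_and_eq_of_insert_eq_insert (snd_lt_of_mem_lowerBoundPairs hp)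
    (snd_lt_of_mem_lowerBoundPairs hp') h
  exact Prod.ext (map_injective _ hT) hm

theorem insertShift_surjOn (n k : ℕ) (hk : 1 ≤ k) :
    Set.SurjOn insertShift (lowerBoundPairs n k) (powersetCard (k + 1) (Icc 1 (n + 1))) := by
  intro S hS
  obtain ⟨hSsub, hScard⟩ := mem_powersetCard.1 hS
  have hne : S.Nonempty := card_pos.1 (by omega)
  set m := S.min' hne
  have hm : 1 ≤ m := (mem_Icc.1 (hSsub (S.min'_mem hne))).1
  have hlt : ∀ u ∈ S.erase m, m < u := fun u hu =>
    lt_of_le_of_ne (S.min'_le u (mem_of_mem_erase hu)) (ne_of_mem_erase hu).symm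
  have hle : ∀ u ∈ S.erase m, u ≤ n + 1 := fun u hu =>
    (mem_Icc.1 (hSsub (mem_of_mem_erase hu))).2
  have hUsub : S.erase m ⊆ (Icc 1 n).map (addRightEmbedding 1) := by
    intro u hu
    have := hlt u hu
    have := hle u hu
    rw [map_add_right_Icc, mem_Icc]
    omega
  obtain ⟨T, hTsub, hT⟩ := subset_map_iff.1 hUsub
  have hTcard : #T = k := by
    rw [← card_map (addRightEmbedding 1), ← hT, card_erase_of_mem (S.min'_mem hne), hScard,
      Nat.add_sub_cancel]
  obtain ⟨u, hu⟩ : (S.erase m).Nonempty := by rw [hT]; exact (card_pos.1 (by omega)).map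
  refine ⟨(T, m), mem_lowerBoundPairs.2 ⟨⟨hTsub, hTcard⟩, ?_, fun t ht => ?_⟩, ?_⟩
  · have := hlt u hu
    have := hle u hu
    rw [mem_Icc]
    omega
  · exact Nat.le_of_lt_succ (hlt (t + 1) (hT ▸ mem_map_of_mem _ ht))
  · rw [insertShift, ← hT]
    exact insert_erase (S.min'_mem hne)

theorem a_succ_eq_sum_lowerBoundPairs (n k : ℕ) (hk : 1 ≤ k) :
    a (n + 1) (k + 1) = ∑ p ∈ lowerBoundPairs n k, ∏ t ∈ p.1, ((X : ℤ[X]) ^ (n - t) - 1) := by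
  rw [a, Nat.add_sub_cancel]
  symm
  refine sum_nbij insertShift (fun p hp => insertShift_mem_powersetCard hp)
    (insertShift_injOn n k) (insertShift_surjOn n k hk) fun p hp => ?_
  obtain ⟨⟨-, hcard⟩, -, -⟩ := mem_lowerBoundPairs.1 hp
  rw [insertShift, ← hcard, ← card_map (addRightEmbedding 1),
    prod_range_getD_sort_insert_of_lt (snd_lt_of_mem_lowerBoundPairs hp)
      fun t => (X : ℤ[X]) ^ (n + 1 - t) - 1, prod_map]
  simp only [addRightEmbedding_apply, Nat.add_sub_add_right]

theorem a_eq_b_shift (n k : ℕ) (hn : 1 ≤ n) (hk : 2 ≤ k) :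
    a n k = b (n - 1) (k - 1) := by
  obtain ⟨n, rfl⟩ := Nat.exists_eq_add_of_le' hn
  obtain ⟨k, rfl⟩ : ∃ k', k = k' + 1 := Nat.exists_eq_add_of_le' (by omega)
  rw [Nat.add_sub_cancel, Nat.add_sub_cancel, a_succ_eq_sum_lowerBoundPairs n k (by omega),
    b_eq_sum_lowerBoundPairs n k (by omega)]
end
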